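/- (Bernstein's localization principle for l-spaces.) Let X and T be l-spaces and φ : X → T a continuous map. Let an l-group G act continuously on X preserving each fiber of φ (i.e. φ(g·x) = φ(x) for all g ∈ G, x ∈ X), and let χ : G → ℂˣ be a character. Suppose that for every t ∈ T the fiber φ⁻¹(t) (with its subspace topology and the restricted G-action) satisfies D(φ⁻¹(t))^{G,χ} = 0. Then D(X)^{G,χ} = 0. -/

import Mathlib

open scoped Classical

noncomputable section

/-- The space `S(X)` of compactly supported locally constant `ℂ`-valued functions
on a topological space `X`, as a `ℂ`-submodule of `X → ℂ`. -/
def SSp (X : Type*) [TopologicalSpace X] : Submodule ℂ (X → ℂ) where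
  carrier := {f | IsLocallyConstant f ∧ HasCompactSupport f}
  add_mem' := fun hf hg => ⟨hf.1.add hg.1, hf.2.add hg.2⟩
  zero_mem' := ⟨IsLocallyConstant.const 0, by
    simpa using (HasCompactSupport.zero : HasCompactSupport (fun _ : X => (0:ℂ)))⟩
  smul_mem' := fun c f hf =>
    ⟨hf.1.comp fun y => c • y, by exact hf.2.smul_left (f := fun _ : X => c)⟩

/-- The space `D(X) = S(X)*` of distributions on `X`. -/
abbrev Dst (X : Type*) [TopologicalSpace X] := SSp X →ₗ[ℂ] ℂ

/-- `T ∈ D(X)^{G,χ}`: the distribution `T` on `X` is `(G,χ)`-equivariant for the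
action of `G` on `X`, i.e. `g·T = χ(g)·T` where `(g·T)(f) = T(x ↦ f(g·x))`. -/
def IsEqvDist {X : Type*} [TopologicalSpace X] {G : Type*} [SMul G X]
    (χ : G → ℂ) (T : Dst X) : Prop :=
  ∀ (g : G) (f₁ f₂ : SSp X), (∀ x, f₂.1 x = f₁.1 (g • x)) → T f₂ = χ g * T f₁

/-- `T ∈ D(Y)^{G,χ}` for a `G`-invariant subset `Y ⊆ X` (with the subspace topology
and the restricted action): `g·T = χ(g)·T` where `(g·T)(f) = T(y ↦ f(g·y))`. -/
def IsEqvDistOn {X : Type*} [TopologicalSpace X] {G : Type*} [SMul G X]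
    (Y : Set X) (χ : G → ℂ) (T : Dst Y) : Prop :=
  ∀ (g : G) (f₁ f₂ : SSp Y),
    (∀ (x : X) (hx : x ∈ Y) (hgx : g • x ∈ Y), f₂.1 ⟨x, hx⟩ = f₁.1 ⟨g • x, hgx⟩) →
    T f₂ = χ g * T f₁

/-!
Fix `f ∈ S(X)` and `t ∈ Y`. By duality, the hypothesis on the fibre `Z = φ⁻¹(t)` says that
`f|_Z` is a combination of relations `f₂ - χ(g) f₁`. Since compactly supported locally constant
functions extend from the closed set `Z`, these relations lift to a combination `d` of relations
`e(g·) - χ(g) e` on `X`, and `T` kills `1_{φ⁻¹V} d` for every clopen `V` because `φ⁻¹V` is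
`G`-invariant. As `f - d` vanishes on `Z`, it vanishes over a clopen neighbourhood `U` of `t`, so
`T (1_{φ⁻¹V} f) = 0` for clopen `V ⊆ U`. The image of the support of `f` is compact, so finitely
many such neighbourhoods cover it and `T f = 0`.
-/

open Set Function

lemma exists_isClopen_isCompact_mem_subset {X : Type*} [TopologicalSpace X]
    [LocallyCompactSpace X] [T2Space X] [TotallyDisconnectedSpace X] {x : X} {U : Set X}
    (hU : IsOpen U) (hx : x ∈ U) : ∃ V, IsClopen V ∧ IsCompact V ∧ x ∈ V ∧ V ⊆ U := by
  obtain ⟨K, hK, hxK, hKU⟩ := exists_compact_subset hU hx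
  obtain ⟨V, hV, hxV, hVK⟩ :=
    loc_compact_Haus_tot_disc_of_zero_dim.mem_nhds_iff.1 (isOpen_interior.mem_nhds hxK)
  have hVK : V ⊆ K := hVK.trans interior_subset
  exact ⟨V, hV, hK.of_isClosed_subset hV.isClosed hVK, hxV, hVK.trans hKU⟩

namespace SSp

variable {X : Type*} [TopologicalSpace X]

lemma isClosed_support (f : SSp X) : IsClosed (support f.1) :=
  (f.2.1.isClopen_fiber 0).compl.isClosed

lemma isCompact_support (f : SSp X) : IsCompact (support f.1) :=
  f.2.2.of_isClosed_subset (isClosed_support f) (subset_tsupport _)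

def indicator {W : Set X} (hW : IsClopen W) : SSp X →ₗ[ℂ] SSp X where
  toFun f := ⟨W.indicator f.1,
    by exact (LocallyConstant.indicator ⟨f.1, f.2.1⟩ hW).isLocallyConstant,
    f.2.2.mono (support_indicator.trans_subset inter_subset_right)⟩
  map_add' f₁ f₂ := Subtype.ext (W.indicator_add f₁.1 f₂.1)
  map_smul' c f := Subtype.ext (W.indicator_const_smul c f.1)

lemma indicator_apply {W : Set X} (hW : IsClopen W) (f : SSp X) (x : X) :
    (indicator hW f).1 x = W.indicator f.1 x :=
  rfl

def constIndicator {B : Set X} (hB : IsClopen B) (hBc : IsCompact B) (c : ℂ) : SSp X :=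
  ⟨B.indicator fun _ => c,
    by exact (LocallyConstant.indicator (LocallyConstant.const X c) hB).isLocallyConstant,
    hBc.of_isClosed_subset (isClosed_tsupport _)
      (closure_minimal support_indicator_subset hB.isClosed)⟩

def compSMul {G : Type*} [Group G] [MulAction G X] [ContinuousConstSMul G X] (g : G) :
    SSp X →ₗ[ℂ] SSp X where
  toFun f := ⟨fun x => f.1 (g • x), f.2.1.comp_continuous (continuous_const_smul g),
    f.2.2.comp_homeomorph (Homeomorph.smul g)⟩
  map_add' _ _ := rfl
  map_smul' _ _ := rfl

lemma compSMul_apply {G : Type*} [Group G] [MulAction G X] [ContinuousConstSMul G X] (g : G)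
    (f : SSp X) (x : X) : (compSMul g f).1 x = f.1 (g • x) :=
  rfl

def restrict {Z : Set X} (hZ : IsClosed Z) : SSp X →ₗ[ℂ] SSp Z where
  toFun f := ⟨fun z => f.1 z, f.2.1.comp_continuous continuous_subtype_val,
    f.2.2.comp_isClosedEmbedding hZ.isClosedEmbedding_subtypeVal⟩
  map_add' _ _ := rfl
  map_smul' _ _ := rfl

lemma indicator_compSMul {G : Type*} [Group G] [MulAction G X] [ContinuousConstSMul G X]
    {W : Set X} (hW : IsClopen W) (hWinv : ∀ (g : G) x, g • x ∈ W ↔ x ∈ W) (g : G)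
    (f : SSp X) : indicator hW (compSMul g f) = compSMul g (indicator hW f) := by
  ext x
  simp only [indicator_apply, compSMul_apply, Set.indicator_apply, hWinv]

lemma indicator_inter_add_indicator_diff {V U : Set X} (hV : IsClopen V) (hU : IsClopen U)
    (f : SSp X) : indicator (hV.inter hU) f + indicator (hV.diff hU) f = indicator hV f := by
  ext x
  by_cases hxU : x ∈ U <;> by_cases hxV : x ∈ V <;> simp [indicator_apply, hxU, hxV]

lemma indicator_eq_self {W : Set X} (hW : IsClopen W) {f : SSp X} (hf : support f.1 ⊆ W) :
    indicator hW f = f :=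
  Subtype.ext (Set.indicator_eq_self.2 hf)

theorem restrict_surjective [LocallyCompactSpace X] [T2Space X] [TotallyDisconnectedSpace X]
    {Z : Set X} (hZ : IsClosed Z) : Surjective (restrict hZ) := by
  intro h
  let P : Set Z → Prop := fun S => ∃ (d : SSp X) (B : Set X), IsClopen B ∧
    S ⊆ (↑) ⁻¹' B ∧ ∀ z : Z, d.1 z = ((↑) ⁻¹' B : Set Z).indicator h.1 z
  have hP : P (support h.1) := by
    refine (isCompact_support h).induction_on ?_ ?_ ?_ ?_
    · exact ⟨0, ∅, isClopen_empty, empty_subset _, fun z => by simp⟩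
    · rintro S S' hSS' ⟨d, B, hB, hS'B, hd⟩
      exact ⟨d, B, hB, hSS'.trans hS'B, hd⟩
    · rintro S S' ⟨d, B, hB, hSB, hd⟩ ⟨d', B', hB', hS'B', hd'⟩
      refine ⟨d + indicator (hB'.diff hB) d', B ∪ B', hB.union hB',
        union_subset_union hSB hS'B', fun z => ?_⟩
      by_cases hzB : (z : X) ∈ B <;> by_cases hzB' : (z : X) ∈ B' <;>
        simp_all [indicator_apply, Set.indicator_apply]
    · intro z hz
      -- `h` is constant near `z`; extend that constant by a compact clopen neighbourhood in `X`
      obtain ⟨O, hO, hOfib⟩ := isOpen_induced_iff.1 (h.2.1.isOpen_fiber (h.1 z))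
      obtain ⟨B, hB, hBc, hzB, hBO⟩ :=
        exists_isClopen_isCompact_mem_subset hO (show z ∈ ((↑) ⁻¹' O : Set Z) by rw [hOfib]; rfl)
      refine ⟨(↑) ⁻¹' B, mem_nhdsWithin_of_mem_nhds
        ((hB.isOpen.preimage continuous_subtype_val).mem_nhds hzB),
        constIndicator hB hBc (h.1 z), B, hB, subset_rfl, fun w => ?_⟩
      by_cases hwB : (w : X) ∈ B
      · have hw : w ∈ ((↑) ⁻¹' O : Set Z) := hBO hwB
        rw [hOfib] at hw
        simp only [constIndicator, Set.indicator_apply, hwB, if_true, mem_preimage]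
        exact (hw : h.1 w = h.1 z).symm
      · simp [constIndicator, hwB]
  obtain ⟨d, B, -, hhB, hd⟩ := hP
  exact ⟨d, Subtype.ext (funext fun z => (hd z).trans (congrFun (Set.indicator_eq_self.2 hhB) z))⟩

variable {Y : Type*} [TopologicalSpace Y] {φ : X → Y}

lemma exists_isClopen_mem_forall_eq_zero [LocallyCompactSpace Y] [T2Space Y]
    [TotallyDisconnectedSpace Y] (hφ : Continuous φ) {h : SSp X} {t : Y}
    (ht : ∀ x, φ x = t → h.1 x = 0) : ∃ U, IsClopen U ∧ t ∈ U ∧ ∀ x, φ x ∈ U → h.1 x = 0 := by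
  have hK : IsClosed (φ '' support h.1) := ((isCompact_support h).image hφ).isClosed
  have htK : t ∉ φ '' support h.1 := by
    rintro ⟨x, hx, rfl⟩
    exact hx (ht x rfl)
  obtain ⟨U, hU, htU, hUK⟩ :=
    loc_compact_Haus_tot_disc_of_zero_dim.mem_nhds_iff.1 (hK.isOpen_compl.mem_nhds htK)
  exact ⟨U, hU, htU, fun x hx => notMem_support.1 fun hx' => hUK hx ⟨x, hx', rfl⟩⟩

theorem apply_eq_zero_of_forall_exists_isClopen (L : SSp X →ₗ[ℂ] ℂ) (hφ : Continuous φ)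
    (f : SSp X) (hloc : ∀ t, ∃ U, IsClopen U ∧ t ∈ U ∧
      ∀ V (hV : IsClopen V), V ⊆ U → L (indicator (hV.preimage hφ) f) = 0) :
    L f = 0 := by
  let P : Set Y → Prop := fun S => ∃ U, IsClopen U ∧ S ⊆ U ∧
    ∀ V (hV : IsClopen V), V ⊆ U → L (indicator (hV.preimage hφ) f) = 0
  have hP : P (φ '' support f.1) := by
    refine ((isCompact_support f).image hφ).induction_on ?_ ?_ ?_ ?_
    · refine ⟨∅, isClopen_empty, subset_rfl, fun V hV hV0 => ?_⟩
      obtain rfl := subset_empty_iff.1 hV0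
      rw [show indicator (hV.preimage hφ) f = 0 by ext; simp [indicator_apply], map_zero]
    · rintro S S' hSS' ⟨U, hU, hS'U, hL⟩
      exact ⟨U, hU, hSS'.trans hS'U, hL⟩
    · rintro S S' ⟨U, hU, hSU, hL⟩ ⟨U', hU', hS'U', hL'⟩
      refine ⟨U ∪ U', hU.union hU', union_subset_union hSU hS'U', fun V hV hVU => ?_⟩
      have hVU₁ : L (indicator ((hV.preimage hφ).inter (hU.preimage hφ)) f) = 0 :=
        hL _ (hV.inter hU) inter_subset_right
      have hVU₂ : L (indicator ((hV.preimage hφ).diff (hU.preimage hφ)) f) = 0 :=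
        hL' _ (hV.diff hU) fun y hy => (hVU hy.1).resolve_left hy.2
      rw [← indicator_inter_add_indicator_diff _ (hU.preimage hφ), map_add, hVU₁, hVU₂,
        add_zero]
    · intro t _
      obtain ⟨U, hU, htU, hL⟩ := hloc t
      exact ⟨U, mem_nhdsWithin_of_mem_nhds (hU.isOpen.mem_nhds htU), U, hU, subset_rfl, hL⟩
  obtain ⟨U, hU, hfU, hL⟩ := hP
  rw [← indicator_eq_self (hU.preimage hφ) fun x hx => hfU ⟨x, hx, rfl⟩]
  exact hL U hU subset_rfl

variable {G : Type*}

-- `D(X)^{G,χ}` is the annihilator of `coinvKer χ`: `S(X) ⧸ coinvKer χ` is the space of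
-- `(G,χ)`-coinvariants.
def coinvKer [Group G] [MulAction G X] [ContinuousConstSMul G X] (χ : G → ℂ) :
    Submodule ℂ (SSp X) :=
  Submodule.span ℂ {q | ∃ (g : G) (e : SSp X), compSMul g e - χ g • e = q}

def coinvKerOn [SMul G X] (Z : Set X) (χ : G → ℂ) : Submodule ℂ (SSp Z) :=
  Submodule.span ℂ {q | ∃ (g : G) (f₁ f₂ : SSp Z),
    (∀ (x : X) (hx : x ∈ Z) (hgx : g • x ∈ Z), f₂.1 ⟨x, hx⟩ = f₁.1 ⟨g • x, hgx⟩) ∧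
      f₂ - χ g • f₁ = q}

lemma coinvKer_le_ker [Group G] [MulAction G X] [ContinuousConstSMul G X] {χ : G → ℂ}
    {T : Dst X} (hT : IsEqvDist χ T) : coinvKer χ ≤ LinearMap.ker T := by
  refine Submodule.span_le.2 ?_
  rintro _ ⟨g, e, rfl⟩
  simp [hT g e (compSMul g e) fun _ => rfl]

lemma coinvKerOn_eq_top [SMul G X] {Z : Set X} {χ : G → ℂ}
    (h : ∀ T : Dst Z, IsEqvDistOn Z χ T → T = 0) : coinvKerOn Z χ = ⊤ := by
  by_contra hne
  obtain ⟨T, hT0, hT⟩ :=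
    Submodule.exists_dual_map_eq_bot_of_lt_top (lt_top_iff_ne_top.2 hne) inferInstance
  refine hT0 (h T fun g f₁ f₂ hf => ?_)
  have hrel : T (f₂ - χ g • f₁) = 0 :=
    LinearMap.le_ker_iff_map.2 hT (Submodule.subset_span ⟨g, f₁, f₂, hf, rfl⟩)
  rwa [map_sub, map_smul, smul_eq_mul, sub_eq_zero] at hrel

variable [Group G] [MulAction G X] [ContinuousConstSMul G X] {χ : G → ℂ}

lemma indicator_mem_coinvKer {W : Set X} (hW : IsClopen W)
    (hWinv : ∀ (g : G) x, g • x ∈ W ↔ x ∈ W) {d : SSp X} (hd : d ∈ coinvKer χ) :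
    indicator hW d ∈ coinvKer χ := by
  refine (Submodule.map_span_le _ _ _).2 ?_ (Submodule.mem_map_of_mem hd)
  rintro _ ⟨g, e, rfl⟩
  exact Submodule.subset_span ⟨g, indicator hW e, by
    rw [map_sub, map_smul, indicator_compSMul hW hWinv]⟩

lemma coinvKerOn_le_map_restrict [LocallyCompactSpace X] [T2Space X]
    [TotallyDisconnectedSpace X] {Z : Set X} (hZ : IsClosed Z)
    (hZinv : ∀ (g : G), ∀ x ∈ Z, g • x ∈ Z) :
    coinvKerOn Z χ ≤ (coinvKer χ).map (restrict hZ) := by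
  refine Submodule.span_le.2 ?_
  rintro _ ⟨g, f₁, f₂, hf, rfl⟩
  obtain ⟨e, rfl⟩ := restrict_surjective hZ f₁
  refine ⟨compSMul g e - χ g • e, Submodule.subset_span ⟨g, e, rfl⟩, ?_⟩
  rw [map_sub, map_smul]
  congr
  ext ⟨x, hx⟩
  exact (hf x hx (hZinv g x hx)).symm

theorem exists_isClopen_forall_apply_indicator_eq_zero [LocallyCompactSpace X] [T2Space X]
    [TotallyDisconnectedSpace X] [LocallyCompactSpace Y] [T2Space Y]
    [TotallyDisconnectedSpace Y] (hφ : Continuous φ) (hfib : ∀ (g : G) x, φ (g • x) = φ x)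
    (hfibers : ∀ t : Y, ∀ T : Dst ↥(φ ⁻¹' {t}), IsEqvDistOn (φ ⁻¹' {t}) χ T → T = 0)
    {T : Dst X} (hT : IsEqvDist χ T) (f : SSp X) (t : Y) :
    ∃ U, IsClopen U ∧ t ∈ U ∧
      ∀ V (hV : IsClopen V), V ⊆ U → T (indicator (hV.preimage hφ) f) = 0 := by
  have hZ : IsClosed (φ ⁻¹' {t}) := isClosed_singleton.preimage hφ
  have hf : restrict hZ f ∈ coinvKerOn (φ ⁻¹' {t}) χ := coinvKerOn_eq_top (hfibers t) ▸ trivial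
  obtain ⟨d, hd, hdf⟩ :=
    coinvKerOn_le_map_restrict hZ (fun g x hx => (hfib g x).trans hx) hf
  obtain ⟨U, hU, htU, hfd⟩ := exists_isClopen_mem_forall_eq_zero hφ (h := f - d)
    fun x hx => sub_eq_zero.2 (congrArg (fun q => q.1 ⟨x, hx⟩) hdf).symm
  refine ⟨U, hU, htU, fun V hV hVU => ?_⟩
  have hfd' : indicator (hV.preimage hφ) f = indicator (hV.preimage hφ) d := by
    rw [← sub_eq_zero, ← map_sub]
    ext x
    by_cases hx : φ x ∈ V
    · simpa [indicator_apply, hx] using hfd x (hVU hx)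
    · simp [indicator_apply, hx]
  rw [hfd']
  exact coinvKer_le_ker hT (indicator_mem_coinvKer _ (fun g x => by simp [hfib]) hd)

end SSp

theorem stmt6_general
    (G : Type*) [Group G] [TopologicalSpace G]
    (X : Type*) [TopologicalSpace X] [LocallyCompactSpace X] [T2Space X]
    [TotallyDisconnectedSpace X]
    (Y : Type*) [TopologicalSpace Y] [LocallyCompactSpace Y] [T2Space Y]
    [TotallyDisconnectedSpace Y]
    [MulAction G X] [ContinuousSMul G X]
    (φ : X → Y) (hφ : Continuous φ)
    (hfib : ∀ (g : G) (x : X), φ (g • x) = φ x)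
    (χ : G →* ℂˣ)
    (hfibers : ∀ t : Y, ∀ T : Dst ↥(φ ⁻¹' {t}),
      IsEqvDistOn (φ ⁻¹' {t}) (fun g => (χ g : ℂ)) T → T = 0)
    (T : Dst X) (hT : IsEqvDist (fun g => (χ g : ℂ)) T) : T = 0 :=
  LinearMap.ext fun f => SSp.apply_eq_zero_of_forall_exists_isClopen T hφ f
    (SSp.exists_isClopen_forall_apply_indicator_eq_zero hφ hfib hfibers hT f)

/-- Bernstein's localization principle for l-spaces: let `φ : X → Y` be a
continuous map of l-spaces and let an l-group `G` act continuously on `X` preserving each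
fiber of `φ`.  If `D(φ⁻¹(t))^{G,χ} = 0` for every `t`, then `D(X)^{G,χ} = 0`. -/
theorem stmt6
    (G : Type*) [Group G] [TopologicalSpace G] [IsTopologicalGroup G]
    [LocallyCompactSpace G] [T2Space G] [TotallyDisconnectedSpace G]
    (X : Type*) [TopologicalSpace X] [LocallyCompactSpace X] [T2Space X]
    [TotallyDisconnectedSpace X]
    (Y : Type*) [TopologicalSpace Y] [LocallyCompactSpace Y] [T2Space Y]
    [TotallyDisconnectedSpace Y]
    [MulAction G X] [ContinuousSMul G X]
    (φ : X → Y) (hφ : Continuous φ)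
    (hfib : ∀ (g : G) (x : X), φ (g • x) = φ x)
    (χ : G →* ℂˣ)
    (hfibers : ∀ t : Y, ∀ T : Dst ↥(φ ⁻¹' {t}),
      IsEqvDistOn (φ ⁻¹' {t}) (fun g => (χ g : ℂ)) T → T = 0)
    (T : Dst X) (hT : IsEqvDist (fun g => (χ g : ℂ)) T) : T = 0 :=
  stmt6_general G X Y φ hφ hfib χ hfibers T hT
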